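/- arXiv:2407.05881 — 6 statements merged into one kernel-verified Lean document; each statement's English description precedes it below -/
import Mathlib

section
/- Let c : V ⊗ V → V ⊗ V be the unique k-linear map such that c(x ⊗ y) = q_{ij} · ((y + t_{ij}(y)) ⊗ x) for all x ∈ V_i and y ∈ V_j. Then c satisfies the braid equation (c ⊗ id_V) ∘ (id_V ⊗ c) ∘ (c ⊗ id_V) = (id_V ⊗ c) ∘ (c ⊗ id_V) ∘ (id_V ⊗ c) as maps V ⊗ V ⊗ V → V ⊗ V ⊗ V. Moreover, if every t_{ij} is nilpotent, then c is bijective. -/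
set_option maxRecDepth 20000
set_option maxHeartbeats 1000000
set_option synthInstance.maxHeartbeats 100000


open TensorProduct DirectSum

/-- Let `V = V_1 ⊕ ⋯ ⊕ V_θ` over a field `k`, with nonzero
scalars `q_{ij}` and commuting endomorphisms `t_{ij} ∈ End(V_j)`
(`t_{ik} ∘ t_{jk} = t_{jk} ∘ t_{ik}`).  The unique linear map
`c : V ⊗ V → V ⊗ V` with `c(x ⊗ y) = q_{ij} • ((y + t_{ij} y) ⊗ x)` for
`x ∈ V_i`, `y ∈ V_j` satisfies the braid equation
`(c ⊗ id) ∘ (id ⊗ c) ∘ (c ⊗ id) = (id ⊗ c) ∘ (c ⊗ id) ∘ (id ⊗ c)`, and if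
every `t_{ij}` is nilpotent then `c` is bijective. -/
theorem braiding_of_ab_triple
    (k : Type*) [Field k] (θ : ℕ) (hθ : 0 < θ)
    (V : Fin θ → Type*) [∀ i, AddCommGroup (V i)] [∀ i, Module k (V i)]
    (q : Fin θ → Fin θ → k) (hq : ∀ i j, q i j ≠ 0)
    (t : ∀ (_i j : Fin θ), V j →ₗ[k] V j)
    (hcomm : ∀ i j m : Fin θ, (t i m).comp (t j m) = (t j m).comp (t i m))
    (c : (DirectSum (Fin θ) V ⊗[k] DirectSum (Fin θ) V) →ₗ[k]
         (DirectSum (Fin θ) V ⊗[k] DirectSum (Fin θ) V))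
    (hc : ∀ (i j : Fin θ) (x : V i) (y : V j),
        c (DirectSum.lof k (Fin θ) V i x ⊗ₜ[k] DirectSum.lof k (Fin θ) V j y)
          = q i j •
              ((DirectSum.lof k (Fin θ) V j (y + t i j y)) ⊗ₜ[k]
                DirectSum.lof k (Fin θ) V i x))
    -- `c₁ = c ⊗ id` acting on `(V ⊗ V) ⊗ V`
    (c₁ : ((DirectSum (Fin θ) V ⊗[k] DirectSum (Fin θ) V) ⊗[k]
            DirectSum (Fin θ) V) →ₗ[k]
          ((DirectSum (Fin θ) V ⊗[k] DirectSum (Fin θ) V) ⊗[k]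
            DirectSum (Fin θ) V))
    (hc₁ : c₁ = TensorProduct.map c LinearMap.id)
    -- `c₂ = id ⊗ c` acting on `(V ⊗ V) ⊗ V`, via the associator
    (c₂ : ((DirectSum (Fin θ) V ⊗[k] DirectSum (Fin θ) V) ⊗[k]
            DirectSum (Fin θ) V) →ₗ[k]
          ((DirectSum (Fin θ) V ⊗[k] DirectSum (Fin θ) V) ⊗[k]
            DirectSum (Fin θ) V))
    (hc₂ : c₂ =
        ((TensorProduct.assoc k _ _ _).symm.toLinearMap.comp
          ((TensorProduct.map LinearMap.id c).comp
            (TensorProduct.assoc k _ _ _).toLinearMap))) :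
    c₁.comp (c₂.comp c₁) = c₂.comp (c₁.comp c₂) ∧
    ((∀ i j : Fin θ, IsNilpotent (t i j)) → Function.Bijective c) := by
  constructor
  · subst hc₁ hc₂
    ext i x j y m z
    simp only [LinearMap.coe_comp, Function.comp_apply,
      TensorProduct.AlgebraTensorModule.curry_apply, TensorProduct.curry_apply,
      LinearMap.coe_restrictScalars, TensorProduct.map_tmul, LinearMap.id_coe, id_eq,
      LinearEquiv.coe_coe, TensorProduct.assoc_tmul, TensorProduct.assoc_symm_tmul,
      hc, LinearMap.map_smul, LinearEquiv.map_smul, ← TensorProduct.smul_tmul',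
      TensorProduct.tmul_smul, smul_smul]
    have hz : t j m (t i m z) = t i m (t j m z) := by
      have := DFunLike.congr_fun (hcomm j i m) z
      simpa using this
    rw [show z + t i m z + t j m (z + t i m z) = z + t j m z + t i m (z + t j m z) by
          simp only [map_add]; rw [hz]; abel,
        show q i j * q i m * q j m = q j m * q i m * q i j by ring]
  · intro h
    classical
    -- inverse endomorphisms of `1 + t i j`
    set VV := DirectSum (Fin θ) V with hVV
    let s : ∀ i j : Fin θ, V j →ₗ[k] V j := fun i j => ↑((h i j).isUnit_one_add.unit⁻¹)
    have hs1 : ∀ (i j : Fin θ) (y : V j), s i j y + t i j (s i j y) = y := by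
      intro i j y
      have h1 : (1 + t i j) * (s i j) = 1 := by
        have := (h i j).isUnit_one_add.unit.mul_inv
        rwa [IsUnit.unit_spec] at this
      have := DFunLike.congr_fun h1 y
      simpa [Module.End.mul_apply, LinearMap.add_apply] using this
    have hs2 : ∀ (i j : Fin θ) (y : V j), s i j (y + t i j y) = y := by
      intro i j y
      have h1 : (s i j) * (1 + t i j) = 1 := by
        have := (h i j).isUnit_one_add.unit.inv_mul
        rwa [IsUnit.unit_spec] at this
      have := DFunLike.congr_fun h1 y
      simpa [Module.End.mul_apply, LinearMap.add_apply] using this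
    -- the candidate inverse, built from its values on pure tensors of components
    let G : ∀ a b : Fin θ, V b →ₗ[k] V a →ₗ[k] (VV ⊗[k] VV) := fun a b =>
      (q b a)⁻¹ • (((TensorProduct.mk k VV VV).flip.comp
          ((DirectSum.lof k (Fin θ) V a).comp (s b a))).flip.comp
        (DirectSum.lof k (Fin θ) V b))
    let B : VV →ₗ[k] VV →ₗ[k] (VV ⊗[k] VV) :=
      DirectSum.toModule k (Fin θ) _ (fun a =>
        (DirectSum.toModule k (Fin θ) (V a →ₗ[k] (VV ⊗[k] VV)) (fun b => G a b)).flip)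
    let e : (VV ⊗[k] VV) →ₗ[k] (VV ⊗[k] VV) := TensorProduct.lift B
    have he : ∀ (a b : Fin θ) (u : V a) (v : V b),
        e (DirectSum.lof k (Fin θ) V a u ⊗ₜ[k] DirectSum.lof k (Fin θ) V b v)
          = (q b a)⁻¹ • (DirectSum.lof k (Fin θ) V b v ⊗ₜ[k]
              DirectSum.lof k (Fin θ) V a (s b a u)) := by
      intro a b u v
      show TensorProduct.lift B _ = _
      rw [TensorProduct.lift.tmul]
      rw [DirectSum.toModule_lof]
      rw [LinearMap.flip_apply]
      rw [DirectSum.toModule_lof]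
      simp only [G, LinearMap.smul_apply, LinearMap.coe_comp, Function.comp_apply,
        LinearMap.flip_apply, TensorProduct.mk_apply]
    have hce : c.comp e = LinearMap.id := by
      ext a u b v
      simp only [LinearMap.coe_comp, Function.comp_apply,
        TensorProduct.AlgebraTensorModule.curry_apply, TensorProduct.curry_apply,
        LinearMap.coe_restrictScalars, LinearMap.id_coe, id_eq, he,
        LinearMap.map_smul, hc, smul_smul, hs1]
      rw [inv_mul_cancel₀ (hq b a), one_smul]
    have hec : e.comp c = LinearMap.id := by
      ext a u b v
      simp only [LinearMap.coe_comp, Function.comp_apply,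
        TensorProduct.AlgebraTensorModule.curry_apply, TensorProduct.curry_apply,
        LinearMap.coe_restrictScalars, LinearMap.id_coe, id_eq, hc,
        LinearMap.map_smul, he, smul_smul, hs2]
      rw [mul_inv_cancel₀ (hq a b), one_smul]
    have h1 : Function.LeftInverse e c := fun x => by
      simpa using DFunLike.congr_fun hec x
    have h2 : Function.RightInverse e c := fun x => by
      simpa using DFunLike.congr_fun hce x
    exact ⟨h1.injective, h2.surjective⟩
end

section
/- For every positive integer N and all ℓ ∈ l, y ∈ g, the following identity holds in s: (ad ℓ)^N(y) = (ℓ ▷)^N(y) + Σ_{i=0}^{N−1} (ad ℓ)^i ( ℓ ◁ ((ℓ ▷)^{N−1−i}(y)) ), where ad ℓ = [ℓ, −] is computed in s, (ℓ ▷)^m denotes the m-fold iterate of the map u ↦ ℓ ▷ u on g, and (ℓ ▷)^0 = id. -/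
/-- Let `s` be a Lie algebra over a field `k` with an exact
factorization `(g, l)` (internal direct sum of Lie subalgebras).  For `ℓ ∈ l`,
`y ∈ g` write `⁅ℓ, y⁆ = ℓ ▷ y + ℓ ◁ y` with `ℓ ▷ y ∈ g` and `ℓ ◁ y ∈ l`.
Then for every `N ≥ 1`,
`(ad ℓ)^N y = (ℓ ▷)^N y + ∑_{i=0}^{N-1} (ad ℓ)^i (ℓ ◁ ((ℓ ▷)^{N-1-i} y))`. -/
theorem iterate_ad_formula_left
    (k : Type*) [Field k] (s : Type*) [LieRing s] [LieAlgebra k s]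
    (g l : LieSubalgebra k s)
    (hcompl : IsCompl g.toSubmodule l.toSubmodule)
    (tr tl : s → s → s)
    (htr : ∀ ℓ ∈ l, ∀ y ∈ g, tr ℓ y ∈ g)
    (htl : ∀ ℓ ∈ l, ∀ y ∈ g, tl ℓ y ∈ l)
    (hsum : ∀ ℓ ∈ l, ∀ y ∈ g, ⁅ℓ, y⁆ = tr ℓ y + tl ℓ y)
    (N : ℕ) (hN : 0 < N) (ℓ : s) (hℓ : ℓ ∈ l) (y : s) (hy : y ∈ g) :
    (fun z => ⁅ℓ, z⁆)^[N] y
      = (tr ℓ)^[N] y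
        + ∑ i ∈ Finset.range N,
            (fun z => ⁅ℓ, z⁆)^[i] (tl ℓ ((tr ℓ)^[N - 1 - i] y)) := by
  have hg : ∀ n, (tr ℓ)^[n] y ∈ g := by
    intro n
    induction n with
    | zero => exact hy
    | succ n ih =>
      rw [Function.iterate_succ_apply']
      exact htr ℓ hℓ _ ih
  induction N with
  | zero => omega
  | succ n ih =>
    rcases Nat.eq_zero_or_pos n with hn | hn
    · subst hn
      simp [hsum ℓ hℓ y hy]
    · rw [Function.iterate_succ_apply', ih hn]
      have hls : ∀ (f : ℕ → s), ⁅ℓ, ∑ i ∈ Finset.range n, f i⁆ = ∑ i ∈ Finset.range n, ⁅ℓ, f i⁆ :=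
        fun f => map_sum (LieAlgebra.ad k s ℓ) f (Finset.range n)
      simp only [lie_add, hls]
      rw [hsum ℓ hℓ _ (hg n)]
      rw [Finset.sum_range_succ' (fun i => (fun z => ⁅ℓ, z⁆)^[i] (tl ℓ ((tr ℓ)^[n + 1 - 1 - i] y)))]
      have h0 : n + 1 - 1 - 0 = n := by omega
      rw [Function.iterate_succ_apply']
      simp only [h0, Function.iterate_zero_apply]
      have hshift : ∀ i ∈ Finset.range n,
          (fun z => ⁅ℓ, z⁆)^[i + 1] (tl ℓ ((tr ℓ)^[n + 1 - 1 - (i + 1)] y))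
            = ⁅ℓ, (fun z => ⁅ℓ, z⁆)^[i] (tl ℓ ((tr ℓ)^[n - 1 - i] y))⁆ := by
        intro i hi
        have : n + 1 - 1 - (i + 1) = n - 1 - i := by omega
        rw [this, Function.iterate_succ_apply']
      rw [Finset.sum_congr rfl hshift]
      abel
end

section
/- For every positive integer N and all ℓ ∈ l, y ∈ g, the following identity holds in s: (ad y)^N(ℓ) = Σ_{i=0}^{N−1} (−1)^{N+i} (ad y)^i ( ((◁ y)^{N−1−i}(ℓ)) ▷ y ) + (−1)^N (◁ y)^N(ℓ), where ad y = [y, −] is computed in s, (◁ y)^m denotes the m-fold iterate of the map m ↦ m ◁ y on l, and (◁ y)^0 = id. -/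
/-- Let `s` be a Lie algebra over a field `k` with an exact
factorization `(g, l)`.  For `ℓ ∈ l`, `y ∈ g` write `⁅ℓ, y⁆ = ℓ ▷ y + ℓ ◁ y`
with `ℓ ▷ y ∈ g` and `ℓ ◁ y ∈ l`.  Then for every `N ≥ 1`,
`(ad y)^N ℓ = ∑_{i=0}^{N-1} (−1)^{N+i} (ad y)^i (((◁ y)^{N-1-i} ℓ) ▷ y)
             + (−1)^N (◁ y)^N ℓ`. -/
theorem iterate_ad_formula_right
    (k : Type*) [Field k] (s : Type*) [LieRing s] [LieAlgebra k s]
    (g l : LieSubalgebra k s)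
    (hcompl : IsCompl g.toSubmodule l.toSubmodule)
    (tr tl : s → s → s)
    (htr : ∀ ℓ ∈ l, ∀ y ∈ g, tr ℓ y ∈ g)
    (htl : ∀ ℓ ∈ l, ∀ y ∈ g, tl ℓ y ∈ l)
    (hsum : ∀ ℓ ∈ l, ∀ y ∈ g, ⁅ℓ, y⁆ = tr ℓ y + tl ℓ y)
    (N : ℕ) (hN : 0 < N) (ℓ : s) (hℓ : ℓ ∈ l) (y : s) (hy : y ∈ g) :
    (fun z => ⁅y, z⁆)^[N] ℓ
      = (∑ i ∈ Finset.range N,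
            ((-1 : ℤ) ^ (N + i)) •
              (fun z => ⁅y, z⁆)^[i] (tr ((fun m => tl m y)^[N - 1 - i] ℓ) y))
        + ((-1 : ℤ) ^ N) • (fun m => tl m y)^[N] ℓ := by
  have hz : ∀ (c : ℤ) (x : s), ⁅y, c • x⁆ = c • ⁅y, x⁆ := fun c x =>
    map_zsmul (LieAlgebra.ad k s y) c x
  have hbr : ∀ m ∈ l, ⁅y, m⁆ = -tr m y + -tl m y := fun m hm => by
    rw [← lie_skew, hsum m hm y hy, neg_add]
  have hmem : ∀ n, (fun m => tl m y)^[n] ℓ ∈ l := by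
    intro n
    induction n with
    | zero => simpa using hℓ
    | succ n ih =>
      rw [Function.iterate_succ_apply']
      exact htl _ ih y hy
  induction N, hN using Nat.le_induction with
  | base =>
    simp only [Finset.range_one, Finset.sum_singleton, Function.iterate_one,
      Function.iterate_zero, id_eq, pow_one]
    rw [hbr ℓ hℓ]
    norm_num
  | succ n hn ih =>
    have hlsum : ∀ (m : ℕ) (f : ℕ → s), ⁅y, ∑ i ∈ Finset.range m, f i⁆
        = ∑ i ∈ Finset.range m, ⁅y, f i⁆ := fun m f =>
      map_sum (LieAlgebra.ad k s y) f (Finset.range m)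
    rw [Function.iterate_succ_apply', ih, lie_add, hlsum, hz, Finset.sum_range_succ']
    simp only [hz]
    rw [hbr _ (hmem n)]
    have h1 : ∀ i ∈ Finset.range n,
        ((-1 : ℤ) ^ (n + 1 + (i + 1))) •
          (fun z => ⁅y, z⁆)^[i + 1] (tr ((fun m => tl m y)^[n + 1 - 1 - (i + 1)] ℓ) y)
        = ((-1 : ℤ) ^ (n + i)) •
            ⁅y, (fun z => ⁅y, z⁆)^[i] (tr ((fun m => tl m y)^[n - 1 - i] ℓ) y)⁆ := by
      intro i _
      rw [show n + 1 + (i + 1) = n + i + 2 by omega,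
        show n + 1 - 1 - (i + 1) = n - 1 - i by omega, pow_add,
        Function.iterate_succ_apply']
      norm_num
    rw [Finset.sum_congr rfl h1]
    rw [Function.iterate_succ_apply']
    simp only [Function.iterate_zero, id_eq, Nat.add_sub_cancel, Nat.sub_self,
      Nat.sub_zero]
    rw [show ((-1 : ℤ) ^ (n + 1 + 0)) = -((-1 : ℤ) ^ n) by rw [pow_add]; ring]
    simp only [smul_add, smul_neg, neg_smul]
    abel
end

section
/- The bracket on the k-vector space g × l defined by [(x, ℓ), (y, m)] = ([x, y] + ℓ ▷ y − m ▷ x, [ℓ, m] + ℓ ◁ y − m ◁ x) is k-bilinear, alternating, and satisfies the Jacobi identity; hence it makes g × l into a Lie algebra over k (denoted g ⋈ l) in which g × {0} and {0} × l are Lie subalgebras and [(0, ℓ), (y, 0)] = (ℓ ▷ y, ℓ ◁ y). -/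
/-- Let `(g, l, ▷, ◁)` be a matched pair of Lie algebras over
a field `k` (with `▷ = tr`, `◁ = tl` bilinear maps satisfying the four matched
pair axioms).  Then the bracket
`[(x, ℓ), (y, m)] = ([x, y] + ℓ ▷ y − m ▷ x, [ℓ, m] + ℓ ◁ y − m ◁ x)`
on `g × l` is `k`-bilinear, alternating and satisfies the Jacobi identity,
`g × {0}` and `{0} × l` are closed under it (realizing `g` and `l` as Lie
subalgebras), and `[(0, ℓ), (y, 0)] = (ℓ ▷ y, ℓ ◁ y)`. -/
theorem matched_pair_double_crossproduct_lie
    (k : Type*) [Field k]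
    (g : Type*) [LieRing g] [LieAlgebra k g]
    (l : Type*) [LieRing l] [LieAlgebra k l]
    (tr : l →ₗ[k] g →ₗ[k] g) (tl : l →ₗ[k] g →ₗ[k] l)
    (h1 : ∀ (ℓ m : l) (x : g), tr ⁅ℓ, m⁆ x = tr ℓ (tr m x) - tr m (tr ℓ x))
    (h2 : ∀ (ℓ : l) (x y : g), tl ℓ ⁅x, y⁆ = tl (tl ℓ x) y - tl (tl ℓ y) x)
    (h3 : ∀ (ℓ m : l) (x : g),
        tl ⁅ℓ, m⁆ x
          = ⁅tl ℓ x, m⁆ + ⁅ℓ, tl m x⁆ + tl ℓ (tr m x) - tl m (tr ℓ x))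
    (h4 : ∀ (ℓ : l) (x y : g),
        tr ℓ ⁅x, y⁆
          = ⁅tr ℓ x, y⁆ + ⁅x, tr ℓ y⁆ + tr (tl ℓ x) y - tr (tl ℓ y) x)
    (B : g × l → g × l → g × l)
    (hB : ∀ (x y : g) (ℓ m : l),
        B (x, ℓ) (y, m)
          = (⁅x, y⁆ + tr ℓ y - tr m x, ⁅ℓ, m⁆ + tl ℓ y - tl m x)) :
    -- bilinearity
    (∀ a b c : g × l, B (a + b) c = B a c + B b c) ∧
    (∀ a b c : g × l, B a (b + c) = B a b + B a c) ∧
    (∀ (r : k) (a b : g × l), B (r • a) b = r • B a b) ∧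
    (∀ (r : k) (a b : g × l), B a (r • b) = r • B a b) ∧
    -- alternating
    (∀ a : g × l, B a a = 0) ∧
    -- Jacobi identity
    (∀ a b c : g × l, B a (B b c) + B b (B c a) + B c (B a b) = 0) ∧
    -- `g × {0}` and `{0} × l` are Lie subalgebras
    (∀ x y : g, B (x, 0) (y, 0) = (⁅x, y⁆, 0)) ∧
    (∀ ℓ m : l, B (0, ℓ) (0, m) = (0, ⁅ℓ, m⁆)) ∧
    -- the mixed bracket
    (∀ (ℓ : l) (y : g), B (0, ℓ) (y, 0) = (tr ℓ y, tl ℓ y)) := by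
  refine ⟨?_, ?_, ?_, ?_, ?_, ?_, ?_, ?_, ?_⟩
  · rintro ⟨x, ℓ⟩ ⟨y, m⟩ ⟨z, n⟩
    simp only [Prod.mk_add_mk, hB, Prod.ext_iff, add_lie, map_add,
      LinearMap.add_apply]
    constructor <;> abel
  · rintro ⟨x, ℓ⟩ ⟨y, m⟩ ⟨z, n⟩
    simp only [Prod.mk_add_mk, hB, Prod.ext_iff, lie_add, map_add,
      LinearMap.add_apply]
    constructor <;> abel
  · rintro r ⟨x, ℓ⟩ ⟨y, m⟩
    simp only [Prod.smul_mk, hB, Prod.ext_iff, smul_lie, map_smul,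
      LinearMap.smul_apply, smul_add, smul_sub]
  · rintro r ⟨x, ℓ⟩ ⟨y, m⟩
    simp only [Prod.smul_mk, hB, Prod.ext_iff, lie_smul, map_smul,
      LinearMap.smul_apply, smul_add, smul_sub]
  · rintro ⟨x, ℓ⟩
    simp [hB, Prod.ext_iff]
  · rintro ⟨x, ℓ⟩ ⟨y, m⟩ ⟨z, n⟩
    simp only [hB, Prod.mk_add_mk, Prod.ext_iff, Prod.fst_zero, Prod.snd_zero]
    constructor
    · simp only [lie_add, lie_sub, add_lie, sub_lie, map_add, map_sub,
        LinearMap.add_apply, LinearMap.sub_apply, h1, h4]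
      rw [← lie_skew ((tr ℓ) y) z, ← lie_skew ((tr m) z) x,
        ← lie_skew ((tr n) x) y,
        eq_neg_of_add_eq_zero_right (lie_jacobi x y z)]
      abel
    · simp only [lie_add, lie_sub, add_lie, sub_lie, map_add, map_sub,
        LinearMap.add_apply, LinearMap.sub_apply, h2, h3]
      rw [← lie_skew ((tl m) x) n, ← lie_skew ((tl n) y) ℓ,
        ← lie_skew ((tl ℓ) z) m,
        eq_neg_of_add_eq_zero_right (lie_jacobi ℓ m n)]
      abel
  · intro x y; simp [hB, Prod.ext_iff]
  · intro ℓ m; simp [hB, Prod.ext_iff]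
  · intro ℓ y; simp [hB, Prod.ext_iff]
end

section
/- The subset p₂ := {(u + h, v − h) : u ∈ a₋, h ∈ a₀, v ∈ a₊} is a Lie subalgebra of the product Lie algebra a × a, and the underlying k-vector space of a × a is the internal direct sum of the diagonal subalgebra diag(a) = {(x, x) : x ∈ a} and p₂; that is, (diag(a), p₂) is an exact factorization of a × a. -/
/-- Let `a` be a Lie algebra over a field `k` with `2 ≠ 0` in
`k`, with a triangular decomposition `a = a₋ ⊕ a₀ ⊕ a₊` (with `a₀` abelian,
`[a₊, a₀] ⊆ a₊`, `[a₋, a₀] ⊆ a₋`).  Then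
`p₂ = {(u + h, v − h) : u ∈ a₋, h ∈ a₀, v ∈ a₊}` is a Lie subalgebra of the
product Lie algebra `a × a` (bracket taken componentwise), and
`(diag(a), p₂)` is an exact factorization of `a × a`. -/
theorem triangular_decomposition_exact_factorization
    (k : Type*) [Field k] (a : Type*) [LieRing a] [LieAlgebra k a]
    (h2 : (2 : k) ≠ 0)
    (am a0 ap : LieSubalgebra k a)
    (habelian : ∀ x ∈ a0, ∀ y ∈ a0, ⁅x, y⁆ = 0)
    (hbp : ∀ x ∈ ap, ∀ h ∈ a0, ⁅x, h⁆ ∈ ap)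
    (hbm : ∀ x ∈ am, ∀ h ∈ a0, ⁅x, h⁆ ∈ am)
    (hexist : ∀ z : a, ∃ u ∈ am, ∃ h ∈ a0, ∃ v ∈ ap, z = u + h + v)
    (huniq : ∀ u ∈ am, ∀ h ∈ a0, ∀ v ∈ ap,
        u + h + v = 0 → u = 0 ∧ h = 0 ∧ v = 0)
    -- the componentwise bracket on `a × a`
    (Bk : a × a → a × a → a × a)
    (hBk : ∀ w w' : a × a, Bk w w' = (⁅w.1, w'.1⁆, ⁅w.2, w'.2⁆))
    -- the subset `p₂`
    (P : Set (a × a))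
    (hP : P = {w : a × a | ∃ u ∈ am, ∃ h ∈ a0, ∃ v ∈ ap, w = (u + h, v - h)}) :
    -- `p₂` is a Lie subalgebra of `a × a`
    ((0 : a × a) ∈ P) ∧
    (∀ w ∈ P, ∀ w' ∈ P, w + w' ∈ P) ∧
    (∀ (c : k), ∀ w ∈ P, c • w ∈ P) ∧
    (∀ w ∈ P, ∀ w' ∈ P, Bk w w' ∈ P) ∧
    -- `a × a` is the internal direct sum of the diagonal and `p₂`
    (∀ w : a × a, ∃ x : a, ∃ q ∈ P, w = (x, x) + q) ∧
    (∀ x : a, ∀ q ∈ P, ((x, x) : a × a) + q = 0 → x = 0 ∧ q = 0) := by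
  subst hP
  refine ⟨⟨0, am.zero_mem, 0, a0.zero_mem, 0, ap.zero_mem, by simp [Prod.ext_iff]⟩, ?_, ?_, ?_, ?_, ?_⟩
  · rintro _ ⟨u, hu, h, hh, v, hv, rfl⟩ _ ⟨u', hu', h', hh', v', hv', rfl⟩
    exact ⟨u + u', am.add_mem hu hu', h + h', a0.add_mem hh hh', v + v', ap.add_mem hv hv',
      by simp [Prod.ext_iff]; constructor <;> abel⟩
  · rintro c _ ⟨u, hu, h, hh, v, hv, rfl⟩
    exact ⟨c • u, am.smul_mem c hu, c • h, a0.smul_mem c hh, c • v, ap.smul_mem c hv,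
      by simp [Prod.ext_iff, smul_add, smul_sub]⟩
  · rintro _ ⟨u, hu, h, hh, v, hv, rfl⟩ _ ⟨u', hu', h', hh', v', hv', rfl⟩
    rw [hBk]
    have hm : ⁅u + h, u' + h'⁆ ∈ am := by
      have e : ⁅u + h, u' + h'⁆ = ⁅u, u'⁆ + ⁅u, h'⁆ + (-⁅u', h⁆) + ⁅h, h'⁆ := by
        simp only [add_lie, lie_add, ← lie_skew u' h]; abel
      rw [e, habelian h hh h' hh', add_zero]
      exact am.add_mem (am.add_mem (am.lie_mem hu hu') (hbm u hu h' hh'))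
        (am.neg_mem (hbm u' hu' h hh))
    have hp : ⁅v - h, v' - h'⁆ ∈ ap := by
      have e : ⁅v - h, v' - h'⁆ = ⁅v, v'⁆ + (-⁅v, h'⁆) + ⁅v', h⁆ + ⁅h, h'⁆ := by
        simp only [sub_lie, lie_sub, ← lie_skew v' h]; abel
      rw [e, habelian h hh h' hh', add_zero]
      exact ap.add_mem (ap.add_mem (ap.lie_mem hv hv') (ap.neg_mem (hbp v hv h' hh')))
        (hbp v' hv' h hh)
    exact ⟨_, hm, 0, a0.zero_mem, _, hp, by simp⟩
  · rintro ⟨x, y⟩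
    obtain ⟨U, hU, H, hH, V, hV, hxy⟩ := hexist (x - y)
    set h : a := (2 : k)⁻¹ • H with hhdef
    have hHh : h + h = H := by
      rw [hhdef, ← add_smul]
      rw [show (2:k)⁻¹ + (2:k)⁻¹ = 1 by rw [← two_mul, mul_inv_cancel₀ h2], one_smul]
    refine ⟨x - (U + h), (U + h, (-V) - h),
      ⟨U, hU, h, a0.smul_mem _ hH, -V, ap.neg_mem hV, rfl⟩, ?_⟩
    have : y = x - (U + h) + (-V - h) := by
      have : x - y = U + (h + h) + V := by rw [hHh]; exact hxy
      have := this
      linear_combination (norm := abel_nf) -this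
    simp only [Prod.mk_add_mk, Prod.mk.injEq]
    exact ⟨by abel, this⟩
  · rintro x _ ⟨u, hu, h, hh, v, hv, rfl⟩ hz
    rw [Prod.ext_iff] at hz
    simp only [Prod.fst_add, Prod.snd_add, Prod.fst_zero, Prod.snd_zero] at hz
    obtain ⟨h1, h2'⟩ := hz
    have key : u + (h + h) + (-v) = 0 := by linear_combination (norm := abel_nf) h1 - h2'
    obtain ⟨hu0, hh0, hv0⟩ := huniq u hu (h + h) (a0.add_mem hh hh) (-v) (ap.neg_mem hv) key
    have hh0' : h = 0 := by
      have : (2 : k) • h = 0 := by rw [two_smul]; exact hh0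
      rcases smul_eq_zero.mp this with h' | h'
      · exact absurd h' h2
      · exact h'
    have hv0' : v = 0 := by rw [← neg_eq_zero]; exact hv0
    have hx : x = 0 := by rw [hu0, hh0', add_zero, add_zero] at h1; exact h1
    exact ⟨hx, by simp [hu0, hh0', hv0']⟩
end

section
/- In the algebra A, the images of the monomials x^a y^b with 0 ≤ a, b ≤ p − 1 form a k-basis of A; in particular dim_k A = p². (A is the restricted Jordan plane.) -/
/-!
Spanning: the relation gives `y x^a = x^a y - (a/2) x^(a+1)`, so the span of the monomials
`x^a y^b` (which vanish once `a ≥ p` or `b ≥ p`) is stable under left multiplication by `x` and `y`;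
it contains `1`, hence it is all of `A`.

Independence: `A` acts on `k[s,t]/(s^p, t^p)` by `x ↦ s` and `y ↦ t - ½ s² ∂/∂s`. The relation
`yx - xy + ½x² = 0` is the commutator `[-½ s² ∂/∂s, s] = -½ s²`, and `y^p = 0` holds because the
two summands of `y` commute and are nilpotent, so their sum has `p`-th power `0` in characteristic
`p`. Since `x^a y^b` sends `1` to `s^a t^b`, the monomials are independent.
-/

noncomputable section

/-- The free algebra on two generators `x = ι 0`, `y = ι 1`. -/
abbrev JordanFree (k : Type*) [Field k] := FreeAlgebra k (Fin 2)

namespace JordanStmt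

variable (k : Type*) [Field k]

def X : JordanFree k := FreeAlgebra.ι k (0 : Fin 2)

def Y : JordanFree k := FreeAlgebra.ι k (1 : Fin 2)

/-- The defining relations of the restricted Jordan plane:
`yx − xy + (1/2)x²`, `x^p` and `y^p` are set to `0`.  Taking `RingQuot` of
this relation is the quotient by the two-sided ideal generated by these
elements. -/
def rel (p : ℕ) : JordanFree k → JordanFree k → Prop := fun a b =>
  (a = Y k * X k - X k * Y k + (2⁻¹ : k) • (X k) ^ 2 ∨
    a = (X k) ^ p ∨ a = (Y k) ^ p) ∧ b = 0

/-- The restricted Jordan plane. -/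
def A (p : ℕ) := RingQuot (rel k p)

instance (p : ℕ) : Ring (A k p) := inferInstanceAs (Ring (RingQuot (rel k p)))

instance (p : ℕ) : Algebra k (A k p) :=
  inferInstanceAs (Algebra k (RingQuot (rel k p)))

def xA (p : ℕ) : A k p := RingQuot.mkAlgHom k (rel k p) (X k)

def yA (p : ℕ) : A k p := RingQuot.mkAlgHom k (rel k p) (Y k)

end JordanStmt

open JordanStmt

lemma mul_pow_eq_of_mul_eq {K R : Type*} [CommSemiring K] [Semiring R] [Algebra K R]
    {x y : R} {c : K}
    (h : y * x = x * y + c • x ^ 2) (n : ℕ) : y * x ^ n = x ^ n * y + (n * c) • x ^ (n + 1) := by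
  induction n with
  | zero => simp
  | succ n ih =>
    calc y * x ^ (n + 1) = (x ^ n * y + (n * c) • x ^ (n + 1)) * x := by
          rw [← ih, mul_assoc, ← pow_succ]
      _ = x ^ n * (x * y + c • x ^ 2) + (n * c) • x ^ (n + 2) := by
        rw [add_mul, mul_assoc, h, smul_mul_assoc, ← pow_succ]
      _ = x ^ (n + 1) * y + ((n + 1 : ℕ) * c) • x ^ (n + 1 + 1) := by
        rw [mul_add, mul_smul_comm, ← pow_add, ← mul_assoc, ← pow_succ, add_assoc, Nat.cast_succ,
          add_mul, one_mul, add_smul, add_comm (_ • _) (c • _)]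

namespace RestrictedJordanPlane

section Relations

variable (k : Type*) [Field k] (p : ℕ)

/-- The quotient map, with codomain `A k p` rather than `RingQuot (rel k p)`: the two carry
instances that agree only up to unfolding `A`, which `rw` and `simp` do not see through. -/
def mkA : JordanFree k →ₐ[k] A k p := RingQuot.mkAlgHom k (rel k p)

lemma mkA_surjective : Function.Surjective (mkA k p) := RingQuot.mkAlgHom_surjective k _

lemma mkA_eq_zero_of_rel {a : JordanFree k} (h : rel k p a 0) : mkA k p a = 0 :=
  (RingQuot.mkAlgHom_rel k h).trans (map_zero _)

lemma xA_pow_p : xA k p ^ p = 0 := by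
  have := mkA_eq_zero_of_rel k p (a := X k ^ p) ⟨Or.inr (Or.inl rfl), rfl⟩
  rwa [map_pow] at this

lemma yA_pow_p : yA k p ^ p = 0 := by
  have := mkA_eq_zero_of_rel k p (a := Y k ^ p) ⟨Or.inr (Or.inr rfl), rfl⟩
  rwa [map_pow] at this

lemma yA_mul_xA : yA k p * xA k p = xA k p * yA k p + (-2⁻¹ : k) • xA k p ^ 2 := by
  have h : yA k p * xA k p - xA k p * yA k p + (2⁻¹ : k) • xA k p ^ 2 = 0 := by
    have := mkA_eq_zero_of_rel k p (a := Y k * X k - X k * Y k + (2⁻¹ : k) • X k ^ 2)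
      ⟨Or.inl rfl, rfl⟩
    rwa [map_add, map_sub, map_mul, map_mul, map_smul, map_pow] at this
  rw [← sub_eq_zero, ← h, neg_smul]
  abel

end Relations

section Operators

variable (k : Type*) [Field k] (p : ℕ)

/-- `basisVec k p a b` is the monomial `s^a t^b` of `k[s,t]/(s^p, t^p)`; it is `0` once `a ≥ p` or
`b ≥ p`, which builds the truncation into all formulas below. -/
def basisVec (a b : ℕ) : Fin p × Fin p → k :=
  fun ij => if (ij.1 : ℕ) = a ∧ (ij.2 : ℕ) = b then 1 else 0

variable {k p}

lemma basisVec_eq_zero {a b : ℕ} (h : p ≤ a ∨ p ≤ b) : basisVec k p a b = 0 := by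
  funext ij
  have := ij.1.isLt
  have := ij.2.isLt
  simp only [basisVec, Pi.zero_apply, ite_eq_right_iff, and_imp]
  omega

lemma basisVec_val (ij : Fin p × Fin p) :
    basisVec k p ij.1 ij.2 = Pi.basisFun k (Fin p × Fin p) ij := by
  funext ij'
  simp [basisVec, Pi.single_apply, Prod.ext_iff, Fin.ext_iff]

lemma linearIndependent_basisVec :
    LinearIndependent k (fun ij : Fin p × Fin p => basisVec k p ij.1 ij.2) := by
  simpa only [basisVec_val] using (Pi.basisFun k (Fin p × Fin p)).linearIndependent

lemma ext_basisVec {f g : Module.End k (Fin p × Fin p → k)}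
    (h : ∀ a b, f (basisVec k p a b) = g (basisVec k p a b)) : f = g :=
  (Pi.basisFun k _).ext fun ij => by simpa only [basisVec_val] using h ij.1 ij.2

variable (k p)

def endOfBasisVec (g : ℕ → ℕ → Fin p × Fin p → k) : Module.End k (Fin p × Fin p → k) :=
  (Pi.basisFun k _).constr k fun ij => g ij.1 ij.2

variable {k p}

lemma endOfBasisVec_basisVec {g : ℕ → ℕ → Fin p × Fin p → k}
    (hg : ∀ a b, p ≤ a ∨ p ≤ b → g a b = 0) (a b : ℕ) :
    endOfBasisVec k p g (basisVec k p a b) = g a b := by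
  by_cases h : p ≤ a ∨ p ≤ b
  · rw [basisVec_eq_zero h, map_zero, hg a b h]
  · push Not at h
    have := (Pi.basisFun k _).constr_basis k (fun ij => g ij.1 ij.2)
      ((⟨a, h.1⟩, ⟨b, h.2⟩) : Fin p × Fin p)
    rwa [← basisVec_val] at this

lemma pow_eq_zero_of_raises_degree {T : Module.End k (Fin p × Fin p → k)} {da db : ℕ}
    (hd : 0 < da + db)
    (hT : ∀ a b, ∃ c : k, T (basisVec k p a b) = c • basisVec k p (a + da) (b + db)) :
    T ^ p = 0 := by
  have hpow : ∀ n a b, ∃ c : k,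
      (T ^ n) (basisVec k p a b) = c • basisVec k p (a + n * da) (b + n * db) := by
    intro n
    induction n with
    | zero => exact fun a b => ⟨1, by simp⟩
    | succ n ih =>
      intro a b
      obtain ⟨c, hc⟩ := hT a b
      obtain ⟨c', hc'⟩ := ih (a + da) (b + db)
      refine ⟨c * c', ?_⟩
      rw [pow_succ, Module.End.mul_apply, hc, map_smul, hc', smul_smul]
      congr 2 <;> ring
  refine ext_basisVec fun a b => ?_
  obtain ⟨c, hc⟩ := hpow p a b
  have hvanish : p ≤ a + p * da ∨ p ≤ b + p * db := by
    obtain h | h : 0 < da ∨ 0 < db := by omega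
    exacts [.inl (le_add_left (Nat.le_mul_of_pos_right p h)),
      .inr (le_add_left (Nat.le_mul_of_pos_right p h))]
  rw [hc, basisVec_eq_zero hvanish, smul_zero, LinearMap.zero_apply]

variable (k p)

/-- With `basisVec a b = s^a t^b`, `xOp` and `tOp` are multiplication by `s` and `t`, and
`dOp = -½ s² ∂/∂s`. -/
def xOp : Module.End k (Fin p × Fin p → k) := endOfBasisVec k p fun a b => basisVec k p (a + 1) b

def tOp : Module.End k (Fin p × Fin p → k) := endOfBasisVec k p fun a b => basisVec k p a (b + 1)

def dOp : Module.End k (Fin p × Fin p → k) :=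
  endOfBasisVec k p fun a b => (-2⁻¹ * a : k) • basisVec k p (a + 1) b

def yOp : Module.End k (Fin p × Fin p → k) := tOp k p + dOp k p

variable {k p}

@[simp]
lemma xOp_basisVec (a b : ℕ) : xOp k p (basisVec k p a b) = basisVec k p (a + 1) b :=
  endOfBasisVec_basisVec (fun _ _ h => basisVec_eq_zero (by omega)) a b

@[simp]
lemma tOp_basisVec (a b : ℕ) : tOp k p (basisVec k p a b) = basisVec k p a (b + 1) :=
  endOfBasisVec_basisVec (fun _ _ h => basisVec_eq_zero (by omega)) a b

@[simp]
lemma dOp_basisVec (a b : ℕ) :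
    dOp k p (basisVec k p a b) = (-2⁻¹ * a : k) • basisVec k p (a + 1) b :=
  endOfBasisVec_basisVec (fun _ _ h => by rw [basisVec_eq_zero (by omega), smul_zero]) a b

@[simp]
lemma yOp_basisVec (a b : ℕ) :
    yOp k p (basisVec k p a b) =
      basisVec k p a (b + 1) + (-2⁻¹ * a : k) • basisVec k p (a + 1) b := by
  simp [yOp]

lemma xOp_pow_basisVec (n a b : ℕ) : (xOp k p ^ n) (basisVec k p a b) = basisVec k p (a + n) b := by
  induction n generalizing a with
  | zero => simp
  | succ n ih => rw [pow_succ, Module.End.mul_apply, xOp_basisVec, ih, add_right_comm, add_assoc]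

lemma yOp_pow_basisVec_zero (n b : ℕ) :
    (yOp k p ^ n) (basisVec k p 0 b) = basisVec k p 0 (b + n) := by
  induction n generalizing b with
  | zero => simp
  | succ n ih => simp [pow_succ, ih, add_right_comm, add_assoc]

lemma xOp_pow_p : xOp k p ^ p = 0 :=
  pow_eq_zero_of_raises_degree (da := 1) (db := 0) one_pos fun a b => ⟨1, by simp⟩

lemma commute_tOp_dOp : Commute (tOp k p) (dOp k p) :=
  ext_basisVec fun a b => by simp

lemma yOp_pow_p (hp : p.Prime) [CharP k p] : yOp k p ^ p = 0 := by
  have : Fact p.Prime := ⟨hp⟩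
  have : NeZero p := ⟨hp.ne_zero⟩
  have : CharP (Module.End k (Fin p × Fin p → k)) p :=
    charP_of_injective_algebraMap (algebraMap k _).injective p
  have htp : tOp k p ^ p = 0 :=
    pow_eq_zero_of_raises_degree (da := 0) (db := 1) one_pos fun a b => ⟨1, by simp⟩
  have hdp : dOp k p ^ p = 0 :=
    pow_eq_zero_of_raises_degree (da := 1) (db := 0) one_pos fun a b => ⟨_, dOp_basisVec a b⟩
  rw [yOp, add_pow_char_of_commute p commute_tOp_dOp, htp, hdp, add_zero]

lemma yOp_mul_xOp : yOp k p * xOp k p - xOp k p * yOp k p + (2⁻¹ : k) • xOp k p ^ 2 = 0 :=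
  ext_basisVec fun a b => by
    simp only [LinearMap.add_apply, LinearMap.sub_apply, LinearMap.smul_apply,
      Module.End.mul_apply, pow_two, xOp_basisVec, yOp_basisVec, map_add, map_smul,
      LinearMap.zero_apply]
    push_cast
    match_scalars <;> ring

end Operators

section Representation

variable {k : Type*} [Field k] {p : ℕ}

lemma freeAlgebraLift_eq_of_rel [CharP k p] (hp : p.Prime) ⦃a b : JordanFree k⦄ (h : rel k p a b) :
    FreeAlgebra.lift k ![xOp k p, yOp k p] a = FreeAlgebra.lift k ![xOp k p, yOp k p] b := by
  obtain ⟨rfl | rfl | rfl, rfl⟩ := h <;>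
    simp [X, Y, yOp_mul_xOp, xOp_pow_p, yOp_pow_p hp]

variable (k p) in
def jordanRep [CharP k p] (hp : p.Prime) : A k p →ₐ[k] Module.End k (Fin p × Fin p → k) :=
  RingQuot.liftAlgHom k ⟨_, freeAlgebraLift_eq_of_rel hp⟩

@[simp]
lemma jordanRep_xA [CharP k p] (hp : p.Prime) : jordanRep k p hp (xA k p) = xOp k p :=
  (RingQuot.liftAlgHom_mkAlgHom_apply k _ _ _).trans (by simp [X])

@[simp]
lemma jordanRep_yA [CharP k p] (hp : p.Prime) : jordanRep k p hp (yA k p) = yOp k p :=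
  (RingQuot.liftAlgHom_mkAlgHom_apply k _ _ _).trans (by simp [Y])

end Representation

variable (k : Type*) [Field k] (p : ℕ)

def monomial (ab : Fin p × Fin p) : A k p := xA k p ^ (ab.1 : ℕ) * yA k p ^ (ab.2 : ℕ)

lemma linearIndependent_monomial [CharP k p] (hp : p.Prime) :
    LinearIndependent k (monomial k p) := by
  refine LinearIndependent.of_comp
    (LinearMap.applyₗ (basisVec k p 0 0) ∘ₗ (jordanRep k p hp).toLinearMap) ?_
  convert linearIndependent_basisVec (k := k) (p := p) using 1
  funext ab
  simp [monomial, xOp_pow_basisVec, yOp_pow_basisVec_zero]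

lemma xA_pow_mul_yA_pow_mem_span (a b : ℕ) :
    xA k p ^ a * yA k p ^ b ∈ Submodule.span k (Set.range (monomial k p)) := by
  by_cases h : a < p ∧ b < p
  · exact Submodule.subset_span ⟨(⟨a, h.1⟩, ⟨b, h.2⟩), rfl⟩
  · rcases not_and_or.mp h with ha | hb
    · rw [← Nat.add_sub_of_le (not_lt.mp ha), pow_add, xA_pow_p, zero_mul, zero_mul]
      exact zero_mem _
    · rw [← Nat.add_sub_of_le (not_lt.mp hb), pow_add, yA_pow_p, zero_mul, mul_zero]
      exact zero_mem _

lemma mul_mem_span_monomial_of_forall {g : A k p}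
    (h : ∀ a b : ℕ, g * (xA k p ^ a * yA k p ^ b) ∈ Submodule.span k (Set.range (monomial k p)))
    {w : A k p} (hw : w ∈ Submodule.span k (Set.range (monomial k p))) :
    g * w ∈ Submodule.span k (Set.range (monomial k p)) := by
  have : Submodule.span k (Set.range (monomial k p)) ≤
      (Submodule.span k (Set.range (monomial k p))).comap (LinearMap.mulLeft k g) :=
    Submodule.span_le.mpr (by rintro _ ⟨ab, rfl⟩; exact h _ _)
  exact this hw

lemma mul_mem_span_monomial (z : A k p) {w : A k p}
    (hw : w ∈ Submodule.span k (Set.range (monomial k p))) :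
    z * w ∈ Submodule.span k (Set.range (monomial k p)) := by
  obtain ⟨u, rfl⟩ := mkA_surjective k p z
  induction u using FreeAlgebra.induction generalizing w with
  | grade0 r =>
    rw [AlgHom.commutes, ← Algebra.smul_def]
    exact Submodule.smul_mem _ _ hw
  | grade1 i =>
    refine mul_mem_span_monomial_of_forall k p (fun a b => ?_) hw
    fin_cases i
    · change xA k p * _ ∈ _
      rw [← mul_assoc, ← pow_succ']
      exact xA_pow_mul_yA_pow_mem_span k p _ _
    · change yA k p * _ ∈ _
      rw [← mul_assoc, mul_pow_eq_of_mul_eq (yA_mul_xA k p), add_mul, mul_assoc, ← pow_succ',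
        smul_mul_assoc]
      exact add_mem (xA_pow_mul_yA_pow_mem_span k p _ _)
        (Submodule.smul_mem _ _ (xA_pow_mul_yA_pow_mem_span k p _ _))
  | mul u v hu hv =>
    rw [map_mul, mul_assoc]
    exact hu (hv hw)
  | add u v hu hv =>
    rw [map_add, add_mul]
    exact add_mem (hu hw) (hv hw)

lemma span_monomial_eq_top : Submodule.span k (Set.range (monomial k p)) = ⊤ := by
  refine Submodule.eq_top_iff'.mpr fun z => ?_
  have h1 : (1 : A k p) ∈ Submodule.span k (Set.range (monomial k p)) := by
    simpa using xA_pow_mul_yA_pow_mem_span k p 0 0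
  simpa only [mul_one] using mul_mem_span_monomial k p z h1

end RestrictedJordanPlane

theorem restricted_jordan_plane_basis_general
    (k : Type*) [Field k] (p : ℕ) (hp : p.Prime)
    [CharP k p] :
    LinearIndependent k
      (fun ab : Fin p × Fin p =>
        xA k p ^ (ab.1 : ℕ) * yA k p ^ (ab.2 : ℕ)) ∧
    Submodule.span k
      (Set.range (fun ab : Fin p × Fin p =>
        xA k p ^ (ab.1 : ℕ) * yA k p ^ (ab.2 : ℕ))) = ⊤ ∧
    Module.finrank k (A k p) = p ^ 2 := by
  have hli := RestrictedJordanPlane.linearIndependent_monomial k p hp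
  have hspan := RestrictedJordanPlane.span_monomial_eq_top k p
  refine ⟨hli, hspan, ?_⟩
  rw [Module.finrank_eq_card_basis (Module.Basis.mk hli hspan.ge), Fintype.card_prod,
    Fintype.card_fin, sq]

/-- Let `k` be a field of odd prime characteristic `p` and
`A` the restricted Jordan plane over `k`.  The images of the monomials
`x^a y^b`, `0 ≤ a, b ≤ p − 1`, form a `k`-basis of `A`; in particular
`dim_k A = p²`. -/
theorem restricted_jordan_plane_basis
    (k : Type*) [Field k] (p : ℕ) (hp : p.Prime) (hodd : Odd p)
    [CharP k p] :
    LinearIndependent k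
      (fun ab : Fin p × Fin p =>
        xA k p ^ (ab.1 : ℕ) * yA k p ^ (ab.2 : ℕ)) ∧
    Submodule.span k
      (Set.range (fun ab : Fin p × Fin p =>
        xA k p ^ (ab.1 : ℕ) * yA k p ^ (ab.2 : ℕ))) = ⊤ ∧
    Module.finrank k (A k p) = p ^ 2 :=
  restricted_jordan_plane_basis_general k p hp
end
end
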